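/- arXiv:2402.16376 — 3 statements merged into one kernel-verified Lean document; each statement's English description precedes it below -/
import Mathlib

section
/- Let (µₙ)_{n≥0} and µ be Borel probability measures on ℝ with finite second moments such that µₙ converges narrowly (weakly against bounded continuous functions) to µ and ∫ x² µₙ(dx) → ∫ x² µ(dx). Then limsup_{n→∞} E(µₙ) ≤ E(µ), where the limsup is taken in [−∞,∞). -/
/-!
Write `log |x - y| ≤ g_δ(x - y) + 2δ(x² + y²)` with `g_δ` bounded and continuous. For each `δ`,
narrow convergence of `μₙ ⊗ μₙ` to `μ ⊗ μ` and convergence of the second moments turn this into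
`limsup E(μₙ) ≤ ½ ∫ (g_δ(x - y) + 2δ(x² + y²)) dμ⊗μ`. As `δ → 0` these majorants converge
pointwise to `log |x - y|` and stay below the `μ ⊗ μ`-integrable function `4(x² + y²) + 2`, so a
reverse Fatou lemma for integrals with values in `[-∞, ∞)` bounds the right-hand side by `E(μ)`.
-/

open MeasureTheory Filter
open scoped ENNReal Topology

/-- The free entropy `E(mu) = (1/2)∫∫ log|x−y| dmu dmu`, as an extended real number:
one half of the difference between the lintegral of the positive part and the lintegral of
the negative part of `log|x−y|` with respect to the product measure. -/
noncomputable def freeEntropy (mu : Measure ℝ) : EReal :=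
  ((1 / 2 : ℝ) : EReal) *
    (((∫⁻ p : ℝ × ℝ, ENNReal.ofReal (Real.log |p.1 - p.2|) ∂(mu.prod mu)) : EReal)
      - ((∫⁻ p : ℝ × ℝ, ENNReal.ofReal (-Real.log |p.1 - p.2|) ∂(mu.prod mu)) : EReal))

open Real

section ExtendedIntegral

variable {α : Type*} [MeasurableSpace α] {μ : Measure α}

noncomputable def erealIntegral (f : α → ℝ) (μ : Measure α) : EReal :=
  (∫⁻ x, ENNReal.ofReal (f x) ∂μ : EReal) - (∫⁻ x, ENNReal.ofReal (-f x) ∂μ : EReal)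

theorem erealIntegral_eq_integral {f : α → ℝ} (hf : Integrable f μ) :
    erealIntegral f μ = ((∫ x, f x ∂μ : ℝ) : EReal) := by
  have hneg : ∫⁻ x, ENNReal.ofReal (-f x) ∂μ ≠ ∞ := hf.neg.lintegral_lt_top.ne
  rw [integral_eq_lintegral_pos_part_sub_lintegral_neg_part hf, EReal.coe_sub,
    EReal.coe_ennreal_toReal hf.lintegral_lt_top.ne, EReal.coe_ennreal_toReal hneg]
  rfl

theorem erealIntegral_mono {f g : α → ℝ} (h : f ≤ g) : erealIntegral f μ ≤ erealIntegral g μ :=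
  EReal.sub_le_sub
    (EReal.coe_ennreal_le_coe_ennreal_iff.2 <|
      lintegral_mono fun x => ENNReal.ofReal_le_ofReal (h x))
    (EReal.coe_ennreal_le_coe_ennreal_iff.2 <|
      lintegral_mono fun x => ENNReal.ofReal_le_ofReal (neg_le_neg (h x)))

theorem EReal.coe_ennreal_limsup {ι : Type*} {l : Filter ι} [l.NeBot] (u : ι → ℝ≥0∞) :
    ((limsup u l : ℝ≥0∞) : EReal) = limsup (fun i => (u i : EReal)) l :=
  Monotone.map_limsup_of_continuousAt (fun _ _ h => EReal.coe_ennreal_le_coe_ennreal_iff.2 h) u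
    continuous_coe_ennreal_ereal.continuousAt

theorem EReal.coe_ennreal_liminf {ι : Type*} {l : Filter ι} [l.NeBot] (u : ι → ℝ≥0∞) :
    ((liminf u l : ℝ≥0∞) : EReal) = liminf (fun i => (u i : EReal)) l :=
  Monotone.map_liminf_of_continuousAt (fun _ _ h => EReal.coe_ennreal_le_coe_ennreal_iff.2 h) u
    continuous_coe_ennreal_ereal.continuousAt

/-- Fatou's lemma for the negative parts and its dominated reverse form for the positive parts. -/
theorem limsup_erealIntegral_le {f : ℕ → α → ℝ} {g F : α → ℝ} (hf : ∀ j, Measurable (f j))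
    (hF : Integrable F μ) (hfF : ∀ j, f j ≤ F)
    (hfg : ∀ x, Tendsto (fun j => f j x) atTop (𝓝 (g x))) :
    limsup (fun j => erealIntegral (f j) μ) atTop ≤ erealIntegral g μ := by
  set A := fun j => ∫⁻ x, ENNReal.ofReal (f j x) ∂μ
  set B := fun j => ∫⁻ x, ENNReal.ofReal (-f j x) ∂μ
  have hA : limsup A atTop ≤ ∫⁻ x, ENNReal.ofReal (g x) ∂μ := by
    refine (limsup_lintegral_le _ (fun j => (hf j).ennreal_ofReal)
      (fun j => ae_of_all _ fun x => ENNReal.ofReal_le_ofReal (hfF j x))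
      hF.lintegral_lt_top.ne).trans_eq (lintegral_congr fun x => ?_)
    exact ((ENNReal.continuous_ofReal.tendsto _).comp (hfg x)).limsup_eq
  have hB : ∫⁻ x, ENNReal.ofReal (-g x) ∂μ ≤ liminf B atTop := by
    refine le_of_eq_of_le (lintegral_congr fun x => ?_)
      (lintegral_liminf_le fun j => (hf j).neg.ennreal_ofReal)
    exact (((ENNReal.continuous_ofReal.tendsto _).comp (hfg x).neg).liminf_eq).symm
  have hA_ne_top : limsup A atTop ≠ ⊤ := by
    refine (hA.trans_lt (lt_of_le_of_lt (lintegral_mono fun x => ?_) hF.lintegral_lt_top)).ne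
    exact ENNReal.ofReal_le_ofReal (le_of_tendsto' (hfg x) fun j => hfF j x)
  calc limsup (fun j => erealIntegral (f j) μ) atTop
      = limsup ((fun j => (A j : EReal)) + -fun j => (B j : EReal)) atTop := rfl
    _ ≤ limsup (fun j => (A j : EReal)) atTop + limsup (-fun j => (B j : EReal)) atTop := by
      refine EReal.limsup_add_le (Or.inr ?_) (Or.inl ?_)
      · rw [EReal.limsup_neg, ← EReal.coe_ennreal_liminf]
        exact fun h => EReal.coe_ennreal_ne_bot _ (EReal.neg_eq_top_iff.1 h)
      · rw [← EReal.coe_ennreal_limsup]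
        exact fun h => hA_ne_top (EReal.coe_ennreal_eq_top_iff.1 h)
    _ = ((limsup A atTop : ℝ≥0∞) : EReal) - ((liminf B atTop : ℝ≥0∞) : EReal) := by
      rw [EReal.limsup_neg, EReal.coe_ennreal_limsup, EReal.coe_ennreal_liminf]; rfl
    _ ≤ erealIntegral g μ :=
      EReal.sub_le_sub (EReal.coe_ennreal_le_coe_ennreal_iff.2 hA)
        (EReal.coe_ennreal_le_coe_ennreal_iff.2 hB)

end ExtendedIntegral

theorem tendsto_integral_prod_self {Ω ι : Type*} [MeasurableSpace Ω] [TopologicalSpace Ω]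
    [SecondCountableTopology Ω] [TopologicalSpace.PseudoMetrizableSpace Ω]
    [OpensMeasurableSpace Ω] {l : Filter ι} (μs : ι → Measure Ω) (μ : Measure Ω)
    [∀ i, IsProbabilityMeasure (μs i)] [IsProbabilityMeasure μ]
    (h : ∀ g : BoundedContinuousFunction Ω ℝ,
      Tendsto (fun i => ∫ x, g x ∂(μs i)) l (𝓝 (∫ x, g x ∂μ)))
    (g : BoundedContinuousFunction (Ω × Ω) ℝ) :
    Tendsto (fun i => ∫ p, g p ∂((μs i).prod (μs i))) l (𝓝 (∫ p, g p ∂(μ.prod μ))) := by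
  let P : ι → ProbabilityMeasure Ω := fun i => ⟨μs i, inferInstance⟩
  have hP : Tendsto P l (𝓝 ⟨μ, inferInstance⟩) :=
    ProbabilityMeasure.tendsto_iff_forall_integral_tendsto.2 h
  have hPP := (ProbabilityMeasure.continuous_prod.tendsto _).comp (hP.prodMk_nhds hP)
  exact ProbabilityMeasure.tendsto_iff_forall_integral_tendsto.1 hPP g

/-- A bounded continuous majorant of `log |t|` up to an error `δ t²` at large `|t|`. The tent
`δ - |t| / δ` is there because of the convention `log 0 = 0`. -/
noncomputable def logApprox (δ t : ℝ) : ℝ :=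
  max (min (log (|t| + δ)) δ⁻¹) (δ - |t| / δ)

theorem continuous_logApprox {δ : ℝ} (hδ : 0 < δ) : Continuous (logApprox δ) := by
  have : Continuous fun t => log (|t| + δ) :=
    (continuous_abs.add continuous_const).log fun t =>
      (add_pos_of_nonneg_of_pos (abs_nonneg t) hδ).ne'
  unfold logApprox
  fun_prop

theorem abs_logApprox_le {δ : ℝ} (hδ : 0 < δ) (t : ℝ) :
    |logApprox δ t| ≤ |log δ| + δ⁻¹ + δ := by
  have hlog : log δ ≤ log (|t| + δ) := log_le_log hδ (by linarith [abs_nonneg t])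
  have : 0 ≤ |t| / δ := by positivity
  have : 0 < δ⁻¹ := by positivity
  rw [abs_le]
  constructor
  · refine (le_max_left _ _).trans' (le_min ?_ ?_) <;>
      linarith [neg_abs_le (log δ), abs_nonneg (log δ)]
  · refine max_le ((min_le_right _ _).trans ?_) ?_ <;> linarith [abs_nonneg (log δ)]

noncomputable def logApproxBCF {δ : ℝ} (hδ : 0 < δ) : BoundedContinuousFunction (ℝ × ℝ) ℝ :=
  .ofNormedAddCommGroup (fun p => logApprox δ (p.1 - p.2))
    ((continuous_logApprox hδ).comp (continuous_fst.sub continuous_snd)) _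
    fun p => abs_logApprox_le hδ (p.1 - p.2)

theorem logApprox_le {δ : ℝ} (hδ : 0 < δ) (hδ1 : δ ≤ 1) (t : ℝ) : logApprox δ t ≤ |t| + 1 := by
  have : log (|t| + δ) ≤ |t| + δ - 1 := log_le_sub_one_of_pos (by positivity)
  have : 0 ≤ |t| / δ := by positivity
  have := abs_nonneg t
  exact max_le ((min_le_left _ _).trans (by linarith)) (by linarith)

theorem log_abs_le_logApprox_add {δ : ℝ} (hδ : 0 < δ) (t : ℝ) :
    log |t| ≤ logApprox δ t + δ * t ^ 2 := by
  have hsq : 0 ≤ δ * t ^ 2 := by positivity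
  rcases eq_or_ne t 0 with rfl | ht
  · have : δ ≤ logApprox δ 0 := by simp [logApprox]
    simp only [abs_zero, log_zero]
    linarith
  have htpos : 0 < |t| := abs_pos.2 ht
  have hlog : log |t| ≤ |t| - 1 := log_le_sub_one_of_pos htpos
  rcases lt_or_ge (δ * |t|) 1 with hsmall | hlarge
  · have : |t| < δ⁻¹ := by rw [← one_div, lt_div_iff₀ hδ]; linarith
    have : log |t| ≤ min (log (|t| + δ)) δ⁻¹ :=
      le_min (log_le_log htpos (by linarith)) (by linarith)
    have : min (log (|t| + δ)) δ⁻¹ ≤ logApprox δ t := le_max_left _ _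
    linarith
  · have hδt : |t| ≤ δ * t ^ 2 := by nlinarith [sq_abs t]
    have : 0 ≤ log (|t| + δ) := log_nonneg (by nlinarith)
    have : 0 ≤ min (log (|t| + δ)) δ⁻¹ := le_min this (by positivity)
    have : min (log (|t| + δ)) δ⁻¹ ≤ logApprox δ t := le_max_left _ _
    linarith

theorem tendsto_logApprox (t : ℝ) :
    Tendsto (fun δ => logApprox δ t) (𝓝[>] 0) (𝓝 (log |t|)) := by
  rcases eq_or_ne t 0 with rfl | ht
  · have : ∀ᶠ δ in 𝓝[>] (0 : ℝ), δ = logApprox δ 0 := by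
      filter_upwards [self_mem_nhdsWithin] with δ (hδ : 0 < δ)
      have : min (log δ) δ⁻¹ ≤ δ := (min_le_left _ _).trans (by linarith [log_le_sub_one_of_pos hδ])
      simp [logApprox, max_eq_right this]
    simpa using (tendsto_nhdsWithin_of_tendsto_nhds tendsto_id).congr' this
  have htpos : 0 < |t| := abs_pos.2 ht
  have hlog : Tendsto (fun δ => log (|t| + δ)) (𝓝[>] 0) (𝓝 (log |t|)) := by
    have : ContinuousAt (fun δ => log (|t| + δ)) 0 :=
      (continuousAt_const.add continuousAt_id).log (by simpa using htpos.ne')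
    simpa using this.tendsto.mono_left nhdsWithin_le_nhds
  have htent : Tendsto (fun δ => δ - |t| / δ) (𝓝[>] 0) atBot := by
    have := (tendsto_neg_atTop_atBot.comp (tendsto_inv_nhdsGT_zero.const_mul_atTop htpos))
    refine (tendsto_nhdsWithin_of_tendsto_nhds tendsto_id).add_atBot this |>.congr fun δ => ?_
    simp [div_eq_mul_inv, sub_eq_add_neg]
  refine hlog.congr' ?_
  filter_upwards [hlog.eventually (gt_mem_nhds (lt_add_one (log |t|))),
    hlog.eventually (lt_mem_nhds (sub_one_lt (log |t|))),
    tendsto_inv_nhdsGT_zero.eventually_ge_atTop (log |t| + 1),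
    htent.eventually_le_atBot (log |t| - 1)] with δ h₁ h₂ h₃ h₄
  rw [logApprox, min_eq_left (by linarith), max_eq_left (by linarith)]

noncomputable def logMajorant (δ : ℝ) (p : ℝ × ℝ) : ℝ :=
  logApprox δ (p.1 - p.2) + 2 * δ * (p.1 ^ 2 + p.2 ^ 2)

theorem log_abs_sub_le_logMajorant {δ : ℝ} (hδ : 0 < δ) (p : ℝ × ℝ) :
    log |p.1 - p.2| ≤ logMajorant δ p := by
  have := log_abs_le_logApprox_add hδ (p.1 - p.2)
  have : δ * (p.1 - p.2) ^ 2 ≤ 2 * δ * (p.1 ^ 2 + p.2 ^ 2) := by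
    nlinarith [sq_nonneg (p.1 + p.2)]
  rw [logMajorant]
  linarith

theorem logMajorant_le {δ : ℝ} (hδ : 0 < δ) (hδ1 : δ ≤ 1) (p : ℝ × ℝ) :
    logMajorant δ p ≤ 4 * (p.1 ^ 2 + p.2 ^ 2) + 2 := by
  have := logApprox_le hδ hδ1 (p.1 - p.2)
  have : |p.1 - p.2| ≤ (p.1 - p.2) ^ 2 + 1 := by
    nlinarith [sq_abs (p.1 - p.2), abs_nonneg (p.1 - p.2)]
  have : 2 * δ * (p.1 ^ 2 + p.2 ^ 2) ≤ 2 * (p.1 ^ 2 + p.2 ^ 2) := by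
    nlinarith [sq_nonneg p.1, sq_nonneg p.2]
  rw [logMajorant]
  nlinarith [sq_nonneg (p.1 + p.2)]

theorem continuous_logMajorant {δ : ℝ} (hδ : 0 < δ) : Continuous (logMajorant δ) := by
  have := continuous_logApprox hδ
  unfold logMajorant
  fun_prop

theorem tendsto_logMajorant (p : ℝ × ℝ) :
    Tendsto (fun δ => logMajorant δ p) (𝓝[>] 0) (𝓝 (log |p.1 - p.2|)) := by
  have hδ : Tendsto (fun δ : ℝ => δ) (𝓝[>] 0) (𝓝 0) :=
    tendsto_nhdsWithin_of_tendsto_nhds tendsto_id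
  simpa [logMajorant] using
    (tendsto_logApprox (p.1 - p.2)).add ((hδ.const_mul 2).mul_const (p.1 ^ 2 + p.2 ^ 2))

section SecondMoment

variable {ν : Measure ℝ} [IsProbabilityMeasure ν]

theorem integrable_sq_add_sq (hν : Integrable (fun x => x ^ 2) ν) :
    Integrable (fun p : ℝ × ℝ => p.1 ^ 2 + p.2 ^ 2) (ν.prod ν) :=
  (hν.comp_fst ν).add (hν.comp_snd ν)

theorem integral_sq_add_sq (hν : Integrable (fun x => x ^ 2) ν) :
    ∫ p : ℝ × ℝ, p.1 ^ 2 + p.2 ^ 2 ∂(ν.prod ν) = 2 * ∫ x, x ^ 2 ∂ν := by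
  rw [integral_add (hν.comp_fst ν) (hν.comp_snd ν), integral_fun_fst (fun x => x ^ 2),
    integral_fun_snd (fun x => x ^ 2)]
  simp only [probReal_univ, smul_eq_mul, one_mul]
  ring

theorem integrable_logMajorant (hν : Integrable (fun x => x ^ 2) ν) {δ : ℝ} (hδ : 0 < δ) :
    Integrable (logMajorant δ) (ν.prod ν) :=
  ((logApproxBCF hδ).integrable _).add ((integrable_sq_add_sq hν).const_mul _)

theorem integral_logMajorant (hν : Integrable (fun x => x ^ 2) ν) {δ : ℝ} (hδ : 0 < δ) :
    ∫ p, logMajorant δ p ∂(ν.prod ν) =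
      ∫ p : ℝ × ℝ, logApprox δ (p.1 - p.2) ∂(ν.prod ν) + 2 * δ * (2 * ∫ x, x ^ 2 ∂ν) := by
  rw [← integral_sq_add_sq hν, ← integral_const_mul]
  exact integral_add ((logApproxBCF hδ).integrable _) ((integrable_sq_add_sq hν).const_mul _)

end SecondMoment

theorem tendsto_integral_logMajorant {ι : Type*} {l : Filter ι} (μs : ι → Measure ℝ)
    (μ : Measure ℝ) [∀ i, IsProbabilityMeasure (μs i)] [IsProbabilityMeasure μ]
    (hmom : ∀ i, Integrable (fun x => x ^ 2) (μs i)) (hmom' : Integrable (fun x => x ^ 2) μ)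
    (hnarrow : ∀ g : BoundedContinuousFunction ℝ ℝ,
      Tendsto (fun i => ∫ x, g x ∂(μs i)) l (𝓝 (∫ x, g x ∂μ)))
    (hmom_conv : Tendsto (fun i => ∫ x, x ^ 2 ∂(μs i)) l (𝓝 (∫ x, x ^ 2 ∂μ)))
    {δ : ℝ} (hδ : 0 < δ) :
    Tendsto (fun i => ∫ p, logMajorant δ p ∂((μs i).prod (μs i))) l
      (𝓝 (∫ p, logMajorant δ p ∂(μ.prod μ))) := by
  have hμs := fun i => integral_logMajorant (hmom i) hδ
  simp only [hμs, integral_logMajorant hmom' hδ]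
  exact (tendsto_integral_prod_self μs μ hnarrow (logApproxBCF hδ)).add
    ((hmom_conv.const_mul 2).const_mul _)

theorem freeEntropy_eq_erealIntegral (ν : Measure ℝ) :
    freeEntropy ν =
      ((1 / 2 : ℝ) : EReal) * erealIntegral (fun p : ℝ × ℝ => log |p.1 - p.2|) (ν.prod ν) :=
  rfl

theorem freeEntropy_le_integral {ν : Measure ℝ} {h : ℝ × ℝ → ℝ} (hh : Integrable h (ν.prod ν))
    (hle : ∀ p : ℝ × ℝ, log |p.1 - p.2| ≤ h p) :
    freeEntropy ν ≤ ((1 / 2 * ∫ p, h p ∂(ν.prod ν) : ℝ) : EReal) := by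
  rw [freeEntropy_eq_erealIntegral, EReal.coe_mul, ← erealIntegral_eq_integral hh]
  exact mul_le_mul_of_nonneg_left (erealIntegral_mono hle) (by norm_num)

theorem limsup_freeEntropy_le_integral_logMajorant (μs : ℕ → Measure ℝ) (μ : Measure ℝ)
    [∀ n, IsProbabilityMeasure (μs n)] [IsProbabilityMeasure μ]
    (hmom : ∀ n, Integrable (fun x => x ^ 2) (μs n)) (hmom' : Integrable (fun x => x ^ 2) μ)
    (hnarrow : ∀ g : BoundedContinuousFunction ℝ ℝ,
      Tendsto (fun n => ∫ x, g x ∂(μs n)) atTop (𝓝 (∫ x, g x ∂μ)))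
    (hmom_conv : Tendsto (fun n => ∫ x, x ^ 2 ∂(μs n)) atTop (𝓝 (∫ x, x ^ 2 ∂μ)))
    {δ : ℝ} (hδ : 0 < δ) :
    limsup (fun n => freeEntropy (μs n)) atTop ≤
      ((1 / 2 * ∫ p, logMajorant δ p ∂(μ.prod μ) : ℝ) : EReal) :=
  calc limsup (fun n => freeEntropy (μs n)) atTop
      ≤ limsup (fun n => ((1 / 2 * ∫ p, logMajorant δ p ∂((μs n).prod (μs n)) : ℝ) : EReal))
          atTop :=
        limsup_le_limsup (.of_forall fun n => freeEntropy_le_integral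
          (integrable_logMajorant (hmom n) hδ) (log_abs_sub_le_logMajorant hδ))
    _ = _ := (EReal.tendsto_coe.2 ((tendsto_integral_logMajorant μs μ hmom hmom' hnarrow
          hmom_conv hδ).const_mul _)).limsup_eq

theorem limsup_integral_logMajorant_le_freeEntropy {ν : Measure ℝ} [IsProbabilityMeasure ν]
    (hν : Integrable (fun x => x ^ 2) ν) {δ : ℕ → ℝ} (hδ0 : ∀ j, 0 < δ j) (hδ1 : ∀ j, δ j ≤ 1)
    (hδ : Tendsto δ atTop (𝓝 0)) :
    limsup (fun j => ((1 / 2 * ∫ p, logMajorant (δ j) p ∂(ν.prod ν) : ℝ) : EReal)) atTop ≤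
      freeEntropy ν := by
  have hlim : ∀ p : ℝ × ℝ, Tendsto (fun j => logMajorant (δ j) p) atTop (𝓝 (log |p.1 - p.2|)) :=
    fun p => (tendsto_logMajorant p).comp (tendsto_nhdsWithin_iff.2 ⟨hδ, .of_forall hδ0⟩)
  have hF : Integrable (fun p : ℝ × ℝ => 4 * (p.1 ^ 2 + p.2 ^ 2) + 2) (ν.prod ν) :=
    ((integrable_sq_add_sq hν).const_mul 4).add (integrable_const 2)
  simp only [EReal.coe_mul, ← erealIntegral_eq_integral (integrable_logMajorant hν (hδ0 _))]
  rw [EReal.limsup_const_mul_of_nonneg_of_ne_top (by norm_num) (EReal.coe_ne_top _),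
    freeEntropy_eq_erealIntegral]
  exact mul_le_mul_of_nonneg_left (limsup_erealIntegral_le
    (fun j => (continuous_logMajorant (hδ0 j)).measurable) hF
    (fun j => logMajorant_le (hδ0 j) (hδ1 j)) hlim) (by norm_num)

/-- **Upper semicontinuity of the free entropy.**
If probability measures `muₙ` with finite second moments converge narrowly to `mu` and their
second moments converge to that of `mu`, then `limsup E(muₙ) ≤ E(mu)` in `[−∞,∞)`. -/
theorem freeEntropy_limsup_le (mus : ℕ → Measure ℝ) (mu : Measure ℝ)
    [∀ n, IsProbabilityMeasure (mus n)] [IsProbabilityMeasure mu]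
    (hmom : ∀ n, Integrable (fun x => x ^ 2) (mus n))
    (hmom' : Integrable (fun x => x ^ 2) mu)
    (hnarrow : ∀ g : BoundedContinuousFunction ℝ ℝ,
      Tendsto (fun n => ∫ x, g x ∂(mus n)) atTop (𝓝 (∫ x, g x ∂mu)))
    (hmom_conv : Tendsto (fun n => ∫ x, x ^ 2 ∂(mus n)) atTop (𝓝 (∫ x, x ^ 2 ∂mu))) :
    Filter.limsup (fun n => freeEntropy (mus n)) atTop ≤ freeEntropy mu := by
  have hδ0 : ∀ j : ℕ, 0 < 1 / ((j : ℝ) + 1) := fun j => by positivity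
  have hδ1 : ∀ j : ℕ, 1 / ((j : ℝ) + 1) ≤ 1 := fun j =>
    div_le_one_of_le₀ (by linarith [j.cast_nonneg (α := ℝ)]) (by positivity)
  calc limsup (fun n => freeEntropy (mus n)) atTop
      ≤ limsup (fun j : ℕ =>
          ((1 / 2 * ∫ p, logMajorant (1 / ((j : ℝ) + 1)) p ∂(mu.prod mu) : ℝ) : EReal)) atTop :=
        le_limsup_of_frequently_le' (.of_forall fun j =>
          limsup_freeEntropy_le_integral_logMajorant mus mu hmom hmom' hnarrow hmom_conv (hδ0 j))
    _ ≤ freeEntropy mu := limsup_integral_logMajorant_le_freeEntropy hmom' hδ0 hδ1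
          tendsto_one_div_add_atTop_nhds_zero_nat
end

section
/- For every t₁ > 0 there exists no differentiable function λ : [t₁,∞) → ℝ such that λ(t) > √t for all t ≥ t₁ and λ′(t) = (λ(t) − √(λ(t)² − t))/(2t) for all t ≥ t₁. Equivalently, any differentiable solution of this ODE starting above the curve t ↦ √t must touch the curve λ = √t in finite time. -/
/-!
The quantity `λ(t) + √(λ(t)² − t)` is a first integral of the ODE: along a solution it is constant,
say equal to `C`. Since `λ(t) ≤ λ(t) + √(λ(t)² − t) = C`, the solution stays bounded, whereas it
has to stay above `√t`, which is unbounded.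
-/

open Set

theorem Convex.eq_of_hasDerivWithinAt_zero {E : Type*} [NormedAddCommGroup E] [NormedSpace ℝ E]
    {f : ℝ → E} {s : Set ℝ} (hs : Convex ℝ s) (hf : ∀ x ∈ s, HasDerivWithinAt f 0 s x)
    {x y : ℝ} (hx : x ∈ s) (hy : y ∈ s) : f x = f y := by
  have h := hs.norm_image_sub_le_of_norm_hasDerivWithin_le hf (C := 0)
    (fun _ _ => norm_zero.le) hx hy
  rw [zero_mul, norm_le_zero_iff, sub_eq_zero] at h
  exact h.symm

theorem sq_sub_pos_of_sqrt_lt {a t : ℝ} (h : Real.sqrt t < a) : 0 < a ^ 2 - t := by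
  have ha : 0 < a := (Real.sqrt_nonneg t).trans_lt h
  rw [sub_pos]
  exact (Real.sqrt_lt' ha).1 h

/-- With `s = √(a² − t)`, the drift `d = (a − s)/(2t)` satisfies `2ad − 1 = −2sd`. -/
theorem outlier_drift_add_sqrt_drift_eq_zero {a s t : ℝ} (hs : s ^ 2 = a ^ 2 - t) (hs0 : s ≠ 0)
    (ht : t ≠ 0) :
    (a - s) / (2 * t) + (2 * a * ((a - s) / (2 * t)) - 1) / (2 * s) = 0 := by
  field_simp
  linear_combination (-1 : ℝ) * hs

theorem hasDerivWithinAt_add_sqrt_sq_sub_zero {lam : ℝ → ℝ} {s : Set ℝ} {t : ℝ} (ht : t ≠ 0)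
    (hpos : 0 < lam t ^ 2 - t)
    (hode : HasDerivWithinAt lam ((lam t - Real.sqrt (lam t ^ 2 - t)) / (2 * t)) s t) :
    HasDerivWithinAt (fun u => lam u + Real.sqrt (lam u ^ 2 - u)) 0 s t := by
  have hinner := (hode.pow 2).sub (hasDerivWithinAt_id t s)
  refine (hode.add (hinner.sqrt hpos.ne')).congr_deriv ?_
  norm_num only [Pi.sub_apply, Pi.pow_apply, id_eq, pow_one]
  exact outlier_drift_add_sqrt_drift_eq_zero (Real.sq_sqrt hpos.le) (Real.sqrt_pos.2 hpos).ne' ht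

/-- **The outlier reaches the bulk in finite time.**
For every `t₁ > 0` there is no differentiable function `λ : [t₁,∞) → ℝ` staying strictly
above the curve `t ↦ √t` and solving `λ'(t) = (λ(t) − √(λ(t)² − t))/(2t)` on `[t₁,∞)`. -/
theorem no_global_outlier (t₁ : ℝ) (ht₁ : 0 < t₁) :
    ¬ ∃ lam : ℝ → ℝ,
      (∀ t, t₁ ≤ t → Real.sqrt t < lam t) ∧
      (∀ t, t₁ ≤ t →
        HasDerivWithinAt lam ((lam t - Real.sqrt ((lam t) ^ 2 - t)) / (2 * t)) (Ici t₁) t) := by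
  rintro ⟨lam, habove, hode⟩
  set y : ℝ → ℝ := fun t => lam t + Real.sqrt (lam t ^ 2 - t)
  have hy_const : ∀ t, t₁ ≤ t → y t = y t₁ := fun t ht =>
    (convex_Ici t₁).eq_of_hasDerivWithinAt_zero
      (fun u hu => hasDerivWithinAt_add_sqrt_sq_sub_zero (ht₁.trans_le hu).ne'
        (sq_sub_pos_of_sqrt_lt (habove u hu)) (hode u hu)) ht self_mem_Ici
  set T : ℝ := max t₁ (y t₁ ^ 2)
  have hT : t₁ ≤ T := le_max_left _ _
  refine lt_irrefl (lam T) ?_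
  calc lam T ≤ y T := le_add_of_nonneg_right (Real.sqrt_nonneg _)
    _ = y t₁ := hy_const T hT
    _ ≤ Real.sqrt T := Real.le_sqrt_of_sq_le (le_max_right _ _)
    _ < lam T := habove T hT
end

section
/- For every r > 0 and every x > r, ∫_{−r}^{r} (2/(π r²)) √(r² − y²) · (x − y)⁻¹ dy = (2/r²)(x − √(x² − r²)). -/
/-!
For `0 < r < x` the integrand `√(r² - y²) / (x - y)` has on `(-r, r)` the elementary primitive
`x · arcsin (y / r) - √(r² - y²) + √(x² - r²) · arcsin u`, `u = (r² - x y) / (r (x - y))`,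
which extends continuously to `[-r, r]`. The derivative of the last term simplifies because
`1 - u² = (x² - r²)(r² - y²) / (r (x - y))²`, and since `u` sends `±r` to `∓1` the primitive
increases by `π (x - √(x² - r²))` across the interval.
-/

open Real Set intervalIntegral

lemma hasDerivAt_arcsin_div {r y : ℝ} (hr : 0 < r) (hy : y ∈ Ioo (-r) r) :
    HasDerivAt (fun z => arcsin (z / r)) (1 / √(r ^ 2 - y ^ 2)) y := by
  have hlo : -1 < y / r := by rw [lt_div_iff₀ hr]; linarith [hy.1]
  have hhi : y / r < 1 := by rw [div_lt_one hr]; exact hy.2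
  have hsqrt : √(1 - (y / r) ^ 2) = √(r ^ 2 - y ^ 2) / r := by
    rw [div_pow, one_sub_div (by positivity), sqrt_div' _ (by positivity), sqrt_sq hr.le]
  refine ((hasDerivAt_arcsin hlo.ne' hhi.ne).comp y ((hasDerivAt_id y).div_const r)).congr_deriv ?_
  rw [hsqrt]
  field_simp

lemma hasDerivAt_sqrt_sq_sub {r y : ℝ} (hy : y ^ 2 < r ^ 2) :
    HasDerivAt (fun z => √(r ^ 2 - z ^ 2)) (-y / √(r ^ 2 - y ^ 2)) y := by
  refine (((hasDerivAt_pow 2 y).const_sub (r ^ 2)).sqrt (sub_pos.2 hy).ne').congr_deriv ?_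
  field_simp
  ring

lemma one_sub_sq_mobius {r x y : ℝ} (h : r * (x - y) ≠ 0) :
    1 - ((r ^ 2 - x * y) / (r * (x - y))) ^ 2
      = (x ^ 2 - r ^ 2) * (r ^ 2 - y ^ 2) / (r * (x - y)) ^ 2 := by
  rw [div_pow, one_sub_div (pow_ne_zero 2 h)]
  ring

lemma hasDerivAt_arcsin_mobius {r x y : ℝ} (hr : 0 < r) (hx : r < x) (hy : y ∈ Ioo (-r) r) :
    HasDerivAt (fun z => arcsin ((r ^ 2 - x * z) / (r * (x - z))))
      (-√(x ^ 2 - r ^ 2) / ((x - y) * √(r ^ 2 - y ^ 2))) y := by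
  obtain ⟨hy₁, hy₂⟩ := hy
  have hxy : 0 < x - y := by linarith
  have hden : 0 < r * (x - y) := by positivity
  have hs : 0 < √(r ^ 2 - y ^ 2) := sqrt_pos.2 (by nlinarith)
  have ht : 0 < √(x ^ 2 - r ^ 2) := sqrt_pos.2 (by nlinarith)
  have hsqrt : √(1 - ((r ^ 2 - x * y) / (r * (x - y))) ^ 2)
      = √(x ^ 2 - r ^ 2) * √(r ^ 2 - y ^ 2) / (r * (x - y)) := by
    rw [one_sub_sq_mobius hden.ne', sqrt_div' _ (by positivity), sqrt_sq hden.le,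
      sqrt_mul' _ (by nlinarith)]
  have hmob : HasDerivAt (fun z => (r ^ 2 - x * z) / (r * (x - z)))
      ((r ^ 2 - x ^ 2) / (r * (x - y) ^ 2)) y := by
    refine ((((hasDerivAt_id' y).const_mul x).const_sub (r ^ 2)).div
      (((hasDerivAt_id' y).const_sub x).const_mul r) hden.ne').congr_deriv ?_
    field_simp
    ring
  have hu : 0 < 1 - ((r ^ 2 - x * y) / (r * (x - y))) ^ 2 := by
    rw [one_sub_sq_mobius hden.ne']
    exact div_pos (mul_pos (by nlinarith) (by nlinarith)) (by positivity)
  obtain ⟨hu₁, hu₂⟩ := abs_lt.1 ((sq_lt_one_iff_abs_lt_one _).1 (sub_pos.1 hu))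
  refine ((hasDerivAt_arcsin hu₁.ne' hu₂.ne).comp y hmob).congr_deriv ?_
  rw [hsqrt]
  have ht2 : √(x ^ 2 - r ^ 2) ^ 2 = x ^ 2 - r ^ 2 := sq_sqrt (by nlinarith)
  field_simp
  linear_combination ht2

noncomputable def semicirclePrimitive (r x y : ℝ) : ℝ :=
  x * arcsin (y / r) - √(r ^ 2 - y ^ 2)
    + √(x ^ 2 - r ^ 2) * arcsin ((r ^ 2 - x * y) / (r * (x - y)))

section

variable {r x : ℝ}

lemma hasDerivAt_semicirclePrimitive (hr : 0 < r) (hx : r < x) {y : ℝ} (hy : y ∈ Ioo (-r) r) :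
    HasDerivAt (semicirclePrimitive r x) (√(r ^ 2 - y ^ 2) / (x - y)) y := by
  have hy2 : y ^ 2 < r ^ 2 := by nlinarith [hy.1, hy.2]
  have hxy : x - y ≠ 0 := by linarith [hy.2]
  have hs : √(r ^ 2 - y ^ 2) ≠ 0 := (sqrt_pos.2 (sub_pos.2 hy2)).ne'
  have hs2 : √(r ^ 2 - y ^ 2) ^ 2 = r ^ 2 - y ^ 2 := sq_sqrt (sub_pos.2 hy2).le
  have ht2 : √(x ^ 2 - r ^ 2) ^ 2 = x ^ 2 - r ^ 2 := sq_sqrt (by nlinarith)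
  refine ((((hasDerivAt_arcsin_div hr hy).const_mul x).sub (hasDerivAt_sqrt_sq_sub hy2)).add
    ((hasDerivAt_arcsin_mobius hr hx hy).const_mul _)).congr_deriv ?_
  field_simp
  linear_combination -ht2 - hs2

lemma continuousOn_semicirclePrimitive (hr : 0 < r) (hx : r < x) :
    ContinuousOn (semicirclePrimitive r x) (Icc (-r) r) := by
  have hden : ∀ y ∈ Icc (-r) r, r * (x - y) ≠ 0 := fun y hy =>
    mul_ne_zero hr.ne' (by linarith [hy.2])
  unfold semicirclePrimitive
  fun_prop (disch := assumption)

lemma semicirclePrimitive_sub (hr : 0 < r) (hx : r < x) :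
    semicirclePrimitive r x r - semicirclePrimitive r x (-r) = π * (x - √(x ^ 2 - r ^ 2)) := by
  have h₁ : (r ^ 2 - x * r) / (r * (x - r)) = -1 := by
    rw [div_eq_iff (by nlinarith)]; ring
  have h₂ : (r ^ 2 - x * -r) / (r * (x - -r)) = 1 := by
    rw [div_eq_iff (by nlinarith)]; ring
  simp only [semicirclePrimitive, h₁, h₂, neg_div, div_self hr.ne', arcsin_neg, arcsin_one,
    neg_sq, sub_self, sqrt_zero]
  ring

theorem integral_sqrt_sq_sub_div_sub (hr : 0 < r) (hx : r < x) :
    ∫ y in (-r)..r, √(r ^ 2 - y ^ 2) / (x - y) = π * (x - √(x ^ 2 - r ^ 2)) := by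
  rw [integral_eq_sub_of_hasDerivAt_of_le (by linarith) (continuousOn_semicirclePrimitive hr hx)
    (fun y hy => hasDerivAt_semicirclePrimitive hr hx hy), semicirclePrimitive_sub hr hx]
  refine ContinuousOn.intervalIntegrable (ContinuousOn.div (by fun_prop) (by fun_prop) ?_)
  intro y hy
  rw [uIcc_of_le (by linarith)] at hy
  linarith [hy.2]

end

/-- **Stieltjes transform of the semicircular density.**
For every `r > 0` and every `x > r`,
`∫_{−r}^{r} (2/(π r²)) √(r² − y²) / (x − y) dy = (2/r²)(x − √(x² − r²))`. -/
theorem semicircle_stieltjes (r x : ℝ) (hr : 0 < r) (hx : r < x) :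
    ∫ y in (-r)..r, (2 / (Real.pi * r ^ 2)) * Real.sqrt (r ^ 2 - y ^ 2) / (x - y)
      = (2 / r ^ 2) * (x - Real.sqrt (x ^ 2 - r ^ 2)) := by
  simp_rw [mul_div_assoc]
  rw [integral_const_mul, integral_sqrt_sq_sub_div_sub hr hx]
  field_simp
end
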